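/- Suppose H and H′ are normal sublocal groups of G with normalizing neighborhoods V and V′ respectively, and H and H′ are equivalent, i.e. H ∩ U = H′ ∩ U for some open neighborhood U of 1. Let W and W′ be symmetric open neighborhoods of 1 with W ⊆ U₆, W⁶ ⊆ V and W′ ⊆ U₆, (W′)⁶ ⊆ V′. Then the local quotient groups (G/H)_W and (G/H′)_{W′} are locally isomorphic. -/

import Mathlib

open scoped Topology Manifold ENNReal

/-- A local group in the sense of Goldbring's "Hilbert's Fifth Problem for Local Groups":
a Hausdorff-intended topological space `G` with a distinguished element `one`, a partial
inversion `inv` defined (i.e. meaningful) on the open set `Lambda`, and a partial product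
`mul` meaningful on the open set `Omega`. -/
structure LocalGroup (G : Type*) [TopologicalSpace G] where
  one : G
  Lambda : Set G
  Omega : Set (G × G)
  inv : G → G
  mul : G → G → G
  isOpen_Lambda : IsOpen Lambda
  isOpen_Omega : IsOpen Omega
  one_mem_Lambda : one ∈ Lambda
  pair_one_left : ∀ x : G, (one, x) ∈ Omega
  pair_one_right : ∀ x : G, (x, one) ∈ Omega
  continuousOn_inv : ContinuousOn inv Lambda
  continuousOn_mul : ContinuousOn (fun q : G × G => mul q.1 q.2) Omega
  one_mul : ∀ x : G, mul one x = x
  mul_one : ∀ x : G, mul x one = x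
  mem_inv_right : ∀ x ∈ Lambda, (x, inv x) ∈ Omega
  mem_inv_left : ∀ x ∈ Lambda, (inv x, x) ∈ Omega
  mul_inv_self : ∀ x ∈ Lambda, mul x (inv x) = one
  inv_mul_self : ∀ x ∈ Lambda, mul (inv x) x = one
  assoc : ∀ x y z : G, (x, y) ∈ Omega → (y, z) ∈ Omega → (mul x y, z) ∈ Omega →
    (x, mul y z) ∈ Omega → mul (mul x y) z = mul x (mul y z)

namespace LocalGroup

variable {G : Type*} {G' : Type*} [TopologicalSpace G] [TopologicalSpace G']

/-- The standing conventions of the paper: `Λ = G`, and whenever `(g,h) ∈ Ω` also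
`(h⁻¹, g⁻¹) ∈ Ω` with `(gh)⁻¹ = h⁻¹g⁻¹`. -/
def Std (L : LocalGroup G) : Prop :=
  L.Lambda = Set.univ ∧
    ∀ g h : G, (g, h) ∈ L.Omega →
      (L.inv h, L.inv g) ∈ L.Omega ∧ L.inv (L.mul g h) = L.mul (L.inv h) (L.inv g)

/-- A symmetric subset: contained in the domain of inversion and stable under it. -/
def IsSymmetric (L : LocalGroup G) (S : Set G) : Prop :=
  S ⊆ L.Lambda ∧ L.inv '' S = S

/-- A subgroup of a local group. -/
def IsSubgroup (L : LocalGroup G) (H : Set G) : Prop :=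
  L.one ∈ H ∧ H ⊆ L.Lambda ∧ (∀ x ∈ H, ∀ y ∈ H, (x, y) ∈ L.Omega) ∧
    (∀ x ∈ H, L.inv x ∈ H) ∧ ∀ x ∈ H, ∀ y ∈ H, L.mul x y ∈ H

/-- No small subgroups. -/
def NSS (L : LocalGroup G) : Prop :=
  ∃ U ∈ 𝓝 L.one, ∀ H : Set G, L.IsSubgroup H → H ⊆ U → H = {L.one}

/-- No small connected subgroups. -/
def NSCS (L : LocalGroup G) : Prop :=
  ∃ U ∈ 𝓝 L.one, ∀ H : Set G, L.IsSubgroup H → IsConnected H → H ⊆ U → H = {L.one}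

/-- `(a₁, …, aₙ)` represents `b`: all ways of multiplying the list are defined and equal `b`.
By convention the empty list represents `one`. -/
def Represents (L : LocalGroup G) : List G → G → Prop
  | [], b => b = L.one
  | [a], b => b = a
  | a :: c :: l, b =>
      ∀ i : ℕ, 1 ≤ i → i < (a :: c :: l).length →
        ∃ b₁ b₂ : G, L.Represents ((a :: c :: l).take i) b₁ ∧
          L.Represents ((a :: c :: l).drop i) b₂ ∧ (b₁, b₂) ∈ L.Omega ∧ L.mul b₁ b₂ = b
termination_by l => l.length
decreasing_by
  all_goals simp only [List.length_cons, List.length_take, List.length_drop] at *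
  all_goals omega

/-- `A^n`: all products of `n` elements of `A` (only meaningful when such products are defined). -/
def setPow (L : LocalGroup G) (A : Set G) (n : ℕ) : Set G :=
  {b | ∃ l : List G, l.length = n ∧ (∀ a ∈ l, a ∈ A) ∧ L.Represents l b}

/-- A chain `U₁ ⊇ U₂ ⊇ ⋯` of symmetric open neighborhoods of `1` such that products of `n`
elements of `Uₙ` are defined (the sets `𝒰ₙ` of the paper). -/
def IsProdChain (L : LocalGroup G) (U : ℕ → Set G) : Prop :=
  ∀ n : ℕ, 1 ≤ n →
    IsOpen (U n) ∧ L.one ∈ U n ∧ L.IsSymmetric (U n) ∧ U (n + 1) ⊆ U n ∧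
      ∀ l : List G, l.length = n → (∀ a ∈ l, a ∈ U n) → ∃ b, L.Represents l b

/-- `a^k` is defined and equal to `b`, for `k : ℤ` (with `a^(-n) := (a⁻¹)^n`). -/
def zpowRep (L : LocalGroup G) (a : G) : ℤ → G → Prop
  | Int.ofNat n, b => L.Represents (List.replicate n a) b
  | Int.negSucc n, b => L.Represents (List.replicate (n + 1) (L.inv a)) b

/-- A special neighborhood (relative to a product chain `U`): a compact symmetric
neighborhood of `1` contained in `U 2`, containing no nontrivial subgroup, on which
squaring is injective. -/
def IsSpecialNbhd (L : LocalGroup G) (U : ℕ → Set G) (SU : Set G) : Prop :=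
  IsCompact SU ∧ SU ∈ 𝓝 L.one ∧ L.IsSymmetric SU ∧ SU ⊆ U 2 ∧
    (∀ H : Set G, L.IsSubgroup H → H ⊆ SU → H = {L.one}) ∧
    ∀ x ∈ SU, ∀ y ∈ SU, L.mul x x = L.mul y y → x = y

/-- `Λ_U` for the restriction `G|U`. -/
def restLambda (L : LocalGroup G) (U : Set G) : Set G := L.Lambda ∩ U ∩ L.inv ⁻¹' U

/-- `Ω_U` for the restriction `G|U`. -/
def restOmega (L : LocalGroup G) (U : Set G) : Set (G × G) :=
  {q | q ∈ L.Omega ∧ q.1 ∈ U ∧ q.2 ∈ U ∧ L.mul q.1 q.2 ∈ U}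

/-- A morphism of local groups `L → L'`. -/
def IsMorphism (L : LocalGroup G) (L' : LocalGroup G') (f : G → G') : Prop :=
  Continuous f ∧ f L.one = L'.one ∧
    (∀ x ∈ L.Lambda, f x ∈ L'.Lambda ∧ f (L.inv x) = L'.inv (f x)) ∧
    ∀ x y : G, (x, y) ∈ L.Omega → ((f x, f y) ∈ L'.Omega ∧ f (L.mul x y) = L'.mul (f x) (f y))

/-- `f` is a morphism of local groups `G|U → G'|U'` between restrictions. -/
def IsRestMorphism (L : LocalGroup G) (L' : LocalGroup G') (U : Set G) (U' : Set G')
    (f : G → G') : Prop :=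
  ContinuousOn f U ∧ Set.MapsTo f U U' ∧ f L.one = L'.one ∧
    (∀ x ∈ L.restLambda U, f x ∈ L'.restLambda U' ∧ f (L.inv x) = L'.inv (f x)) ∧
    ∀ x y : G, (x, y) ∈ L.restOmega U →
      ((f x, f y) ∈ L'.restOmega U' ∧ f (L.mul x y) = L'.mul (f x) (f y))

/-- Local isomorphism: a homeomorphism between open neighborhoods of the identities which
is a morphism of restrictions in both directions. -/
def LocallyIsomorphic (L : LocalGroup G) (L' : LocalGroup G') : Prop :=
  ∃ (U : Set G) (U' : Set G') (f : G → G') (g : G' → G),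
    IsOpen U ∧ L.one ∈ U ∧ IsOpen U' ∧ L'.one ∈ U' ∧
      Set.BijOn f U U' ∧ (∀ x ∈ U, g (f x) = x) ∧ (∀ y ∈ U', f (g y) = y) ∧
      L.IsRestMorphism L' U U' f ∧ L'.IsRestMorphism L U' U g

/-- A topological group regarded as a local group with `Λ = G` and `Ω = G × G`. -/
def ofGroup (H : Type*) [TopologicalSpace H] [Group H] [IsTopologicalGroup H] : LocalGroup H where
  one := 1
  Lambda := Set.univ
  Omega := Set.univ
  inv := fun x => x⁻¹
  mul := fun x y => x * y
  isOpen_Lambda := isOpen_univ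
  isOpen_Omega := isOpen_univ
  one_mem_Lambda := trivial
  pair_one_left := fun _ => trivial
  pair_one_right := fun _ => trivial
  continuousOn_inv := continuous_inv.continuousOn
  continuousOn_mul := (continuous_fst.mul continuous_snd).continuousOn
  one_mul := fun x => _root_.one_mul x
  mul_one := fun x => _root_.mul_one x
  mem_inv_right := fun _ _ => trivial
  mem_inv_left := fun _ _ => trivial
  mul_inv_self := fun x _ => mul_inv_cancel x
  inv_mul_self := fun x _ => inv_mul_cancel x
  assoc := fun x y z _ _ _ _ => mul_assoc x y z

/-- A bundled (finite-dimensional, real) Lie group in the Mathlib sense. -/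
structure BundledLieGroup : Type 1 where
  n : ℕ
  carrier : Type
  [ts : TopologicalSpace carrier]
  [t2 : T2Space carrier]
  [grp : Group carrier]
  [tg : IsTopologicalGroup carrier]
  [cs : ChartedSpace (EuclideanSpace ℝ (Fin n)) carrier]
  [lie : LieGroup (𝓡 n) (⊤ : ℕ∞) carrier]

/-- `L` is locally isomorphic to (the local group underlying) a Lie group. -/
def IsLieLocallyIsomorphic (L : LocalGroup G) : Prop :=
  ∃ B : BundledLieGroup,
    letI := B.ts; letI := B.grp; letI := B.tg
    L.LocallyIsomorphic (ofGroup B.carrier)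

/-- A local one-parameter subgroup of `L`, with domain `(-r, r)` (where `r ∈ (0,∞]`). -/
structure LocalOnePS (L : LocalGroup G) where
  r : ℝ≥0∞
  r_pos : 0 < r
  toFun : ℝ → G
  mem_Lambda : ∀ t : ℝ, ENNReal.ofReal |t| < r → toFun t ∈ L.Lambda
  continuousOn : ContinuousOn toFun {t : ℝ | ENNReal.ofReal |t| < r}
  add : ∀ s t : ℝ, ENNReal.ofReal |s| < r → ENNReal.ofReal |t| < r →
    ENNReal.ofReal |s + t| < r →
      (toFun s, toFun t) ∈ L.Omega ∧ toFun (s + t) = L.mul (toFun s) (toFun t)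

variable {L : LocalGroup G}

/-- Equivalence (equality of germs at 0) of local one-parameter subgroups. -/
def OnePSEquiv (X Y : LocalOnePS L) : Prop :=
  ∃ s : ℝ, 0 < s ∧ ENNReal.ofReal s < X.r ∧ ENNReal.ofReal s < Y.r ∧
    ∀ t : ℝ, |t| < s → X.toFun t = Y.toFun t

theorem onePS_exists_small (X : LocalOnePS L) : ∃ s : ℝ, 0 < s ∧ ENNReal.ofReal s < X.r := by
  rcases eq_or_ne X.r ⊤ with h | h
  · exact ⟨1, one_pos, by simp [h]⟩
  · have h0 : X.r ≠ 0 := ne_of_gt X.r_pos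
    have htr : 0 < X.r.toReal := ENNReal.toReal_pos h0 h
    refine ⟨X.r.toReal / 2, by linarith, ?_⟩
    rw [ENNReal.ofReal_lt_iff_lt_toReal (by linarith) h]
    linarith

instance onePSSetoid (L : LocalGroup G) : Setoid (LocalOnePS L) where
  r := OnePSEquiv
  iseqv := by
    constructor
    · intro X
      obtain ⟨s, hs, hsr⟩ := onePS_exists_small X
      exact ⟨s, hs, hsr, hsr, fun _ _ => rfl⟩
    · rintro X Y ⟨s, hs, h1, h2, h3⟩
      exact ⟨s, hs, h2, h1, fun t ht => (h3 t ht).symm⟩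
    · rintro X Y Z ⟨s1, hs1, hX1, hY1, hag1⟩ ⟨s2, hs2, hY2, hZ2, hag2⟩
      refine ⟨min s1 s2, lt_min hs1 hs2, ?_, ?_, fun t ht => ?_⟩
      · exact lt_of_le_of_lt (ENNReal.ofReal_le_ofReal (min_le_left _ _)) hX1
      · exact lt_of_le_of_lt (ENNReal.ofReal_le_ofReal (min_le_right _ _)) hZ2
      · rw [hag1 t (lt_of_lt_of_le ht (min_le_left _ _)),
          hag2 t (lt_of_lt_of_le ht (min_le_right _ _))]

/-- `L(G)`: the set of germs at `0` of local one-parameter subgroups of `L`. -/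
abbrev LGQuot (L : LocalGroup G) := Quotient (onePSSetoid L)

/-- The trivial local one-parameter subgroup `O`. -/
noncomputable def constOnePS (L : LocalGroup G) : LocalOnePS L where
  r := ⊤
  r_pos := by simp
  toFun := fun _ => L.one
  mem_Lambda := fun _ _ => L.one_mem_Lambda
  continuousOn := continuousOn_const
  add := fun s t _ _ _ => ⟨L.pair_one_left L.one, (L.one_mul L.one).symm⟩

/-- The domain of a germ of local one-parameter subgroups: the union of the domains of its
representatives. -/
def germDomain (L : LocalGroup G) (X : LGQuot L) : Set ℝ :=
  {t | ∃ Y : LocalOnePS L, ⟦Y⟧ = X ∧ ENNReal.ofReal |t| < Y.r}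

/-- Evaluation of a germ at a point of its domain (junk value outside). This is
well defined, i.e. independent of the choice of representative, by the basic theory
of local one-parameter subgroups. -/
noncomputable def germEval (L : LocalGroup G) (X : LGQuot L) (t : ℝ) : G := by
  classical exact if h : ∃ Y : LocalOnePS L, ⟦Y⟧ = X ∧ ENNReal.ofReal |t| < Y.r then h.choose.toFun t
  else L.one

/-- The topology on `L(G)` generated by the subbasic sets `B_{C,U}` for `C ⊆ (-2,2)`
compact and `U ⊆ G` open. -/
instance germTopology (L : LocalGroup G) : TopologicalSpace (LGQuot L) :=
  TopologicalSpace.generateFrom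
    {S | ∃ (C : Set ℝ) (U : Set G), IsCompact C ∧ C ⊆ Set.Ioo (-2 : ℝ) 2 ∧ IsOpen U ∧
      S = {X : LGQuot L | C ⊆ germDomain L X ∧ ∀ t ∈ C, germEval L X t ∈ U}}

/-- A sublocal group `H` of `L`, with associated neighborhood `V`. -/
def IsSublocalGroup (L : LocalGroup G) (H V : Set G) : Prop :=
  L.one ∈ H ∧ IsOpen V ∧ L.one ∈ V ∧ H ⊆ V ∧ (∀ x ∈ closure H, x ∈ V → x ∈ H) ∧
    (∀ x ∈ H, x ∈ L.Lambda → L.inv x ∈ V → L.inv x ∈ H) ∧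
    ∀ x ∈ H, ∀ y ∈ H, (x, y) ∈ L.Omega → L.mul x y ∈ V → L.mul x y ∈ H

/-- A normal sublocal group `H` of `L`, with normalizing neighborhood `V`. -/
def IsNormalSublocalGroup (L : LocalGroup G) (H V : Set G) : Prop :=
  L.IsSublocalGroup H V ∧ L.IsSymmetric V ∧
    ∀ y ∈ V, ∀ x ∈ H, ∀ b : G, L.Represents [y, x, L.inv y] b → b ∈ V → b ∈ H

/-- The coset relation `E_H` on `W`. -/
def quotRel (L : LocalGroup G) (H W : Set G) : ↥W → ↥W → Prop :=
  fun x y => L.mul (L.inv ↑x) ↑y ∈ H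

/-- The local coset space `W/E_H`, with the quotient topology. -/
abbrev QuotCarrier (L : LocalGroup G) (H W : Set G) := Quot (L.quotRel H W)

/-- `Q` is the local quotient group structure `(G/H)_W` on `W/E_H`. -/
def IsQuotStructure (L : LocalGroup G) (H W : Set G) (h1W : L.one ∈ W)
    (Q : LocalGroup (L.QuotCarrier H W)) : Prop :=
  Q.one = Quot.mk (L.quotRel H W) ⟨L.one, h1W⟩ ∧
    Q.Lambda = Set.univ ∧
    (∀ (x : ↥W) (hx : L.inv ↑x ∈ W),
      Q.inv (Quot.mk (L.quotRel H W) x) = Quot.mk (L.quotRel H W) ⟨L.inv ↑x, hx⟩) ∧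
    Q.Omega = {q | ∃ x y : ↥W, ((x : G), (y : G)) ∈ L.Omega ∧ L.mul ↑x ↑y ∈ W ∧
      q = (Quot.mk (L.quotRel H W) x, Quot.mk (L.quotRel H W) y)} ∧
    ∀ (x y : ↥W) (_ : ((x : G), (y : G)) ∈ L.Omega) (hm : L.mul ↑x ↑y ∈ W),
      Q.mul (Quot.mk (L.quotRel H W) x) (Quot.mk (L.quotRel H W) y) =
        Quot.mk (L.quotRel H W) ⟨L.mul ↑x ↑y, hm⟩

/-- The sup-norm of a real-valued function. -/
noncomputable def supNorm (f : G → ℝ) : ℝ := ⨆ x : G, |f x|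

/-- `W²` = the set of products of two elements of `W`. -/
def sqSet (L : LocalGroup G) (W : Set G) : Set G :=
  {z | ∃ a ∈ W, ∃ b ∈ W, (a, b) ∈ L.Omega ∧ L.mul a b = z}

/-- The (left-translation) action `a · f` of `a` on functions supported in `W`:
`(a·f)(x) = f (a⁻¹ x)` for `x ∈ W²` and `0` otherwise. -/
noncomputable def act (L : LocalGroup G) (W : Set G) (a : G) (f : G → ℝ) : G → ℝ := by
  classical exact fun x => if x ∈ L.sqSet W then f (L.mul (L.inv a) x) else 0

/-- `ord(x) ≥ n` relative to the special neighborhood `SU`: all powers `x^k`, `|k| ≤ n`,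
are defined and lie in `SU`. -/
def ordGE (L : LocalGroup G) (SU : Set G) (n : ℕ) : Set G :=
  {x | ∀ k : ℤ, k.natAbs ≤ n → ∃ b : G, L.zpowRep x k b ∧ b ∈ SU}

end LocalGroup

/-!
Choose an open symmetric neighbourhood `S` of `1` inside `W ∩ W'` with `S·S ⊆ W ∩ W'` and
`S·(S·S) ⊆ U`. For `s ∈ S` and `t ∈ S ∪ S·S` the element `s⁻¹ t` lies in `U`, where `H` and `H'`
agree, so `s⁻¹ t ∈ H ↔ s⁻¹ t ∈ H'`. Hence `s E_H ↦ s E_{H'}` is a well-defined bijection between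
the images of `S` in the two quotients, and it respects inversion and the partial products.
These images are open and the bijection is a homeomorphism because the `H`-saturation
`{w ∈ W | ∃ s ∈ T, s⁻¹ w ∈ H}` of an open `T ⊆ W` is open: near `w₀ = s₀ h`, right translation
by `h⁻¹` is continuous, sends `w₀` to `s₀ ∈ T`, and satisfies `(g h⁻¹)⁻¹ g = h` for all `g`.
-/

namespace LocalGroup

variable {G : Type*} [TopologicalSpace G] {L : LocalGroup G} {Un : ℕ → Set G}

section Std

variable (hstd : L.Std)
include hstd

theorem Std.mem_Lambda (x : G) : x ∈ L.Lambda := hstd.1 ▸ Set.mem_univ x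

theorem Std.mul_inv_cancel (x : G) : L.mul x (L.inv x) = L.one :=
  L.mul_inv_self x (hstd.mem_Lambda x)

theorem Std.inv_mul_cancel (x : G) : L.mul (L.inv x) x = L.one :=
  L.inv_mul_self x (hstd.mem_Lambda x)

theorem Std.inv_mul_rev {x y : G} (h : (x, y) ∈ L.Omega) :
    L.inv (L.mul x y) = L.mul (L.inv y) (L.inv x) :=
  (hstd.2 x y h).2

theorem Std.inv_inv (x : G) : L.inv (L.inv x) = x := by
  have h := L.assoc (L.inv (L.inv x)) (L.inv x) x (L.mem_inv_left _ (hstd.mem_Lambda _))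
    (L.mem_inv_left x (hstd.mem_Lambda x))
    (by rw [hstd.inv_mul_cancel]; exact L.pair_one_left x)
    (by rw [hstd.inv_mul_cancel]; exact L.pair_one_right _)
  rwa [hstd.inv_mul_cancel, hstd.inv_mul_cancel, L.one_mul, L.mul_one, eq_comm] at h

theorem Std.inv_one : L.inv L.one = L.one := by
  simpa only [L.mul_one] using hstd.inv_mul_cancel L.one

theorem Std.continuous_inv : Continuous L.inv :=
  continuousOn_univ.mp (hstd.1 ▸ L.continuousOn_inv)

theorem Std.inv_mul_mul_self {g k : G} (hgk : (g, k) ∈ L.Omega)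
    (h : (L.inv (L.mul g k), g) ∈ L.Omega) : L.mul (L.inv (L.mul g k)) g = L.inv k := by
  rw [hstd.inv_mul_rev hgk] at h ⊢
  rw [L.assoc _ _ _ (hstd.2 g k hgk).1 (L.mem_inv_left g (hstd.mem_Lambda g)) h
      (by rw [hstd.inv_mul_cancel]; exact L.pair_one_right _),
    hstd.inv_mul_cancel, L.mul_one]

end Std

theorem IsSymmetric.inv_mem {S : Set G} (hS : L.IsSymmetric S) {x : G} (hx : x ∈ S) :
    L.inv x ∈ S :=
  hS.2 ▸ Set.mem_image_of_mem L.inv hx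

section Sublocal

variable {H V : Set G} (hH : L.IsSublocalGroup H V)
include hH

theorem IsSublocalGroup.one_mem : L.one ∈ H := hH.1

theorem IsSublocalGroup.inv_mem {x : G} (hx : x ∈ H) (hxΛ : x ∈ L.Lambda)
    (hxV : L.inv x ∈ V) : L.inv x ∈ H :=
  hH.2.2.2.2.2.1 x hx hxΛ hxV

theorem IsSublocalGroup.mul_mem {x y : G} (hx : x ∈ H) (hy : y ∈ H) (hxy : (x, y) ∈ L.Omega)
    (hxyV : L.mul x y ∈ V) : L.mul x y ∈ H :=
  hH.2.2.2.2.2.2 x hx y hy hxy hxyV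

end Sublocal

section Represents

theorem represents_nil_iff {b : G} : L.Represents [] b ↔ b = L.one := by
  rw [Represents]

theorem represents_singleton_iff {a b : G} : L.Represents [a] b ↔ b = a := by
  rw [Represents]

theorem Represents.split {l : List G} {b : G} (h : L.Represents l b) {i : ℕ} (hi : 1 ≤ i)
    (hil : i < l.length) :
    ∃ b₁ b₂, L.Represents (l.take i) b₁ ∧ L.Represents (l.drop i) b₂ ∧
      (b₁, b₂) ∈ L.Omega ∧ L.mul b₁ b₂ = b := by
  match l, h with
  | _ :: _ :: _, h => rw [Represents] at h; exact h i hi hil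
  | [], _ | [_], _ => simp only [List.length_nil, List.length_singleton] at hil; omega

theorem Represents.pair {x y b : G} (h : L.Represents [x, y] b) :
    (x, y) ∈ L.Omega ∧ L.mul x y = b := by
  obtain ⟨b₁, b₂, h₁, h₂, hΩ, rfl⟩ := h.split le_rfl (by simp)
  obtain rfl := represents_singleton_iff.mp h₁
  obtain rfl := represents_singleton_iff.mp h₂
  exact ⟨hΩ, rfl⟩

theorem Represents.triple {x y z b : G} (h : L.Represents [x, y, z] b) :
    (L.mul x y, z) ∈ L.Omega ∧ (x, L.mul y z) ∈ L.Omega ∧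
      L.mul (L.mul x y) z = b ∧ L.mul x (L.mul y z) = b := by
  obtain ⟨b₁, b₂, h₁, h₂, hΩ₁, hb₁⟩ := h.split le_rfl (by simp)
  obtain ⟨c₁, c₂, k₁, k₂, hΩ₂, hc₂⟩ := h.split (i := 2) (by norm_num) (by simp)
  obtain rfl := represents_singleton_iff.mp h₁
  obtain ⟨-, rfl⟩ := Represents.pair h₂
  obtain ⟨-, rfl⟩ := Represents.pair k₁
  obtain rfl := represents_singleton_iff.mp k₂
  exact ⟨hΩ₂, hΩ₁, hc₂, hb₁⟩

theorem represents_replicate_one : ∀ {n : ℕ} {b : G},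
    L.Represents (List.replicate n L.one) b → b = L.one
  | 0, _, h => represents_nil_iff.mp h
  | 1, _, h => represents_singleton_iff.mp h
  | n + 2, _, h => by
    obtain ⟨b₁, b₂, h₁, h₂, -, rfl⟩ := h.split le_rfl (by simp)
    rw [represents_singleton_iff.mp h₁, represents_replicate_one h₂, L.mul_one]

end Represents

namespace IsProdChain

variable (hUn : L.IsProdChain Un)
include hUn

theorem antitone {m n : ℕ} (hm : 1 ≤ m) (hmn : m ≤ n) : Un n ⊆ Un m := by
  induction n, hmn using Nat.le_induction with
  | base => exact subset_rfl
  | succ n hmn ih => exact ((hUn n (hm.trans hmn)).2.2.2.1).trans ih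

theorem exists_represents {l : List G} {n : ℕ} (hn : l.length ≤ n) (hl : 1 ≤ l.length)
    (hlU : ∀ a ∈ l, a ∈ Un n) : ∃ b, L.Represents l b :=
  (hUn l.length hl).2.2.2.2 l rfl fun a ha => hUn.antitone hl hn (hlU a ha)

theorem mem_Omega {n : ℕ} (hn : 2 ≤ n) {x y : G} (hx : x ∈ Un n) (hy : y ∈ Un n) :
    (x, y) ∈ L.Omega := by
  obtain ⟨b, hb⟩ := hUn.exists_represents (l := [x, y]) hn (by simp) (by simp [hx, hy])
  exact hb.pair.1

theorem mul_assoc {n : ℕ} (hn : 3 ≤ n) {x y z : G} (hx : x ∈ Un n) (hy : y ∈ Un n)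
    (hz : z ∈ Un n) :
    (L.mul x y, z) ∈ L.Omega ∧ (x, L.mul y z) ∈ L.Omega ∧
      L.mul (L.mul x y) z = L.mul x (L.mul y z) := by
  obtain ⟨b, hb⟩ := hUn.exists_represents (l := [x, y, z]) hn (by simp) (by simp [hx, hy, hz])
  obtain ⟨h₁, h₂, e₁, e₂⟩ := hb.triple
  exact ⟨h₁, h₂, e₁.trans e₂.symm⟩

theorem mul_mul_mul_mul {n : ℕ} (hn : 4 ≤ n) {a b c d : G} (ha : a ∈ Un n) (hb : b ∈ Un n)
    (hc : c ∈ Un n) (hd : d ∈ Un n) :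
    (L.mul a b, L.mul c d) ∈ L.Omega ∧
      L.mul (L.mul a b) (L.mul c d) = L.mul a (L.mul (L.mul b c) d) := by
  obtain ⟨r, hr⟩ := hUn.exists_represents (l := [a, b, c, d]) hn (by simp)
    (by simp [ha, hb, hc, hd])
  obtain ⟨p₁, p₂, h₁, h₂, hΩ, rfl⟩ := hr.split (i := 2) (by norm_num) (by simp)
  obtain ⟨q₁, q₂, k₁, k₂, -, hq⟩ := hr.split le_rfl (by simp)
  obtain ⟨-, rfl⟩ := Represents.pair h₁
  obtain ⟨-, rfl⟩ := Represents.pair h₂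
  obtain rfl := represents_singleton_iff.mp k₁
  obtain ⟨-, -, rfl, -⟩ := Represents.triple k₂
  exact ⟨hΩ, hq.symm⟩

theorem mul_mem_setPow {n : ℕ} (hn : 2 ≤ n) {A : Set G} (hA : A ⊆ Un n) (h1 : L.one ∈ A)
    {a b : G} (ha : a ∈ A) (hb : b ∈ A) : L.mul a b ∈ L.setPow A n := by
  set l := a :: b :: List.replicate (n - 2) L.one
  have hlen : l.length = n := by simp [l]; omega
  have hlA : ∀ x ∈ l, x ∈ A := by
    simp only [l, List.mem_cons, List.mem_replicate]
    rintro x (rfl | rfl | ⟨-, rfl⟩) <;> assumption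
  obtain ⟨c, hc⟩ := hUn.exists_represents hlen.le (by simp [l]) fun x hx => hA (hlA x hx)
  refine ⟨l, hlen, hlA, ?_⟩
  convert hc using 1
  obtain rfl | hn := eq_or_lt_of_le hn
  · exact hc.pair.2
  · obtain ⟨b₁, b₂, h₁, h₂, -, rfl⟩ := hc.split (i := 2) (by norm_num) (by omega)
    obtain ⟨-, rfl⟩ := Represents.pair h₁
    rw [represents_replicate_one h₂, L.mul_one]

end IsProdChain

section Quotient

variable {H V W : Set G}

theorem quotRel_equivalence (hstd : L.Std) (hUn : L.IsProdChain Un) (hH : L.IsSublocalGroup H V)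
    (hW : W ⊆ Un 4) (hWsym : L.IsSymmetric W) (hWV : ∀ x ∈ W, ∀ y ∈ W, L.mul x y ∈ V) :
    Equivalence (L.quotRel H W) where
  refl x := by
    show L.mul (L.inv x) x ∈ H
    rw [hstd.inv_mul_cancel]
    exact hH.one_mem
  symm {x y} hxy := by
    show L.mul (L.inv y) x ∈ H
    have hinv : L.inv (L.mul (L.inv x) y) = L.mul (L.inv y) x := by
      rw [hstd.inv_mul_rev (hUn.mem_Omega (by norm_num) (hW (hWsym.inv_mem x.2)) (hW y.2)),
        hstd.inv_inv]
    rw [← hinv]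
    exact hH.inv_mem hxy (hstd.mem_Lambda _) (hinv ▸ hWV _ (hWsym.inv_mem y.2) _ x.2)
  trans {x y z} hxy hyz := by
    show L.mul (L.inv x) z ∈ H
    obtain ⟨hΩ, hassoc⟩ := hUn.mul_mul_mul_mul le_rfl (hW (hWsym.inv_mem x.2)) (hW y.2)
      (hW (hWsym.inv_mem y.2)) (hW z.2)
    have hprod : L.mul (L.mul (L.inv x) y) (L.mul (L.inv y) z) = L.mul (L.inv x) z := by
      rw [hassoc, hstd.mul_inv_cancel, L.one_mul]
    rw [← hprod]
    exact hH.mul_mem hxy hyz hΩ (hprod ▸ hWV _ (hWsym.inv_mem x.2) _ z.2)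

theorem quot_mk_eq_iff (hE : Equivalence (L.quotRel H W)) {a b : W} :
    Quot.mk (L.quotRel H W) a = Quot.mk (L.quotRel H W) b ↔ L.mul (L.inv a) b ∈ H := by
  rw [Quot.eq]
  exact hE.eqvGen_iff

theorem isOpen_setOf_exists_inv_mul_mem (hstd : L.Std) (hUn : L.IsProdChain Un)
    (hW : W ⊆ Un 3) (hWsym : L.IsSymmetric W) (hWo : IsOpen W) (H : Set G) {T : Set G}
    (hTo : IsOpen T) (hTW : T ⊆ W) :
    IsOpen {w | w ∈ W ∧ ∃ s ∈ T, L.mul (L.inv s) w ∈ H} := by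
  rw [isOpen_iff_mem_nhds]
  rintro w₀ ⟨hw₀, s₀, hs₀, hH₀⟩
  have hw₀' := hW (hWsym.inv_mem hw₀)
  set k := L.mul (L.inv w₀) s₀
  have hk : ∀ g ∈ W, (g, k) ∈ L.Omega := fun g hg =>
    (hUn.mul_assoc le_rfl (hW hg) hw₀' (hW (hTW hs₀))).2.1
  have hφ : ContinuousOn (fun g => L.mul g k) W :=
    L.continuousOn_mul.comp (continuousOn_id.prodMk continuousOn_const) hk
  have hφw₀ : L.mul w₀ k = s₀ := by
    rw [← (hUn.mul_assoc le_rfl (hW hw₀) hw₀' (hW (hTW hs₀))).2.2, hstd.mul_inv_cancel,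
      L.one_mul]
  have hk_inv : L.inv k = L.mul (L.inv s₀) w₀ := by
    rw [hstd.inv_mul_rev (hUn.mem_Omega (by norm_num) hw₀' (hW (hTW hs₀))), hstd.inv_inv]
  refine Filter.mem_of_superset ((hφ.isOpen_inter_preimage hWo hTo).mem_nhds
    ⟨hw₀, by simpa only [Set.mem_preimage, hφw₀] using hs₀⟩) ?_
  rintro g ⟨hg, hgT⟩
  refine ⟨hg, _, hgT, ?_⟩
  rw [hstd.inv_mul_mul_self (hk g hg)
    (hUn.mem_Omega (by norm_num) (hW (hWsym.inv_mem (hTW hgT))) (hW hg)), hk_inv]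
  exact hH₀

end Quotient

theorem exists_isOpen_mul_subset {T : Set G} (hT : IsOpen T) (h1 : L.one ∈ T) :
    ∃ P, IsOpen P ∧ L.one ∈ P ∧ P ⊆ T ∧ ∀ x ∈ P, ∀ y ∈ P, L.mul x y ∈ T := by
  have hc : ContinuousAt (fun q : G × G => L.mul q.1 q.2) (L.one, L.one) :=
    L.continuousOn_mul.continuousAt (L.isOpen_Omega.mem_nhds (L.pair_one_left L.one))
  have hpre : (fun q : G × G => L.mul q.1 q.2) ⁻¹' T ∈ 𝓝 (L.one, L.one) :=
    hc (by simpa only [L.one_mul] using hT.mem_nhds h1)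
  obtain ⟨u, v, hu, h1u, hv, h1v, huv⟩ := mem_nhds_prod_iff'.mp hpre
  exact ⟨u ∩ v ∩ T, (hu.inter hv).inter hT, ⟨⟨h1u, h1v⟩, h1⟩, Set.inter_subset_right,
    fun x hx y hy => huv (Set.mk_mem_prod hx.1.1 hy.1.2)⟩

/-- `U` is meant to be a set on which two sublocal groups `H`, `H'` agree: then `s⁻¹ t ∈ H` iff
`s⁻¹ t ∈ H'` for `s ∈ S` and `t ∈ S ∪ S·S`. -/
structure IsComparisonNbhd (L : LocalGroup G) (U W W' S : Set G) : Prop where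
  isOpen : IsOpen S
  one_mem : L.one ∈ S
  inv_mem : ∀ x ∈ S, L.inv x ∈ S
  subset_left : S ⊆ W
  subset_right : S ⊆ W'
  mul_mem_left : ∀ x ∈ S, ∀ y ∈ S, L.mul x y ∈ W
  mul_mem_right : ∀ x ∈ S, ∀ y ∈ S, L.mul x y ∈ W'
  mul_mem_U : ∀ x ∈ S, ∀ y ∈ S, L.mul x y ∈ U
  mul_mul_mem_U : ∀ x ∈ S, ∀ y ∈ S, ∀ z ∈ S, L.mul x (L.mul y z) ∈ U

theorem IsComparisonNbhd.symm {U W W' S : Set G} (hS : L.IsComparisonNbhd U W W' S) :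
    L.IsComparisonNbhd U W' W S :=
  ⟨hS.isOpen, hS.one_mem, hS.inv_mem, hS.subset_right, hS.subset_left, hS.mul_mem_right,
    hS.mul_mem_left, hS.mul_mem_U, hS.mul_mul_mem_U⟩

theorem Std.exists_isComparisonNbhd (hstd : L.Std) {U W W' : Set G} (hU : IsOpen U)
    (h1U : L.one ∈ U) (hW : IsOpen W) (h1W : L.one ∈ W) (hW' : IsOpen W') (h1W' : L.one ∈ W') :
    ∃ S, L.IsComparisonNbhd U W W' S := by
  obtain ⟨P₁, hP₁, h1P₁, hP₁T, hP₁P₁⟩ :=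
    exists_isOpen_mul_subset (hU.inter (hW.inter hW')) ⟨h1U, h1W, h1W'⟩
  obtain ⟨P₂, hP₂, h1P₂, hP₂P₁, hP₂P₂⟩ := exists_isOpen_mul_subset (L := L) hP₁ h1P₁
  have hSP₁ : P₂ ∩ L.inv ⁻¹' P₂ ⊆ P₁ := fun x hx => hP₂P₁ hx.1
  have hSmul : ∀ x ∈ P₂ ∩ L.inv ⁻¹' P₂, ∀ y ∈ P₂ ∩ L.inv ⁻¹' P₂, L.mul x y ∈ U ∩ (W ∩ W') :=
    fun x hx y hy => hP₁P₁ x (hSP₁ hx) y (hSP₁ hy)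
  refine ⟨P₂ ∩ L.inv ⁻¹' P₂, hP₂.inter (hP₂.preimage hstd.continuous_inv),
    ⟨h1P₂, by rwa [Set.mem_preimage, hstd.inv_one]⟩,
    fun x hx => ⟨hx.2, by rw [Set.mem_preimage, hstd.inv_inv]; exact hx.1⟩,
    fun x hx => (hP₁T (hSP₁ hx)).2.1, fun x hx => (hP₁T (hSP₁ hx)).2.2,
    fun x hx y hy => (hSmul x hx y hy).2.1, fun x hx y hy => (hSmul x hx y hy).2.2,
    fun x hx y hy => (hSmul x hx y hy).1,
    fun x hx y hy z hz => (hP₁P₁ x (hSP₁ hx) _ (hP₂P₂ y hy.1 z hz.1)).1⟩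

def quotImage (L : LocalGroup G) (H W S : Set G) : Set (L.QuotCarrier H W) :=
  Quot.mk (L.quotRel H W) '' {w : W | (w : G) ∈ S}

/-- On `quotImage L H W S` this sends the class mod `H` of `s ∈ S` to its class mod `H'`;
elsewhere its value is junk. -/
noncomputable def comparisonMap (L : LocalGroup G) (H W H' W' S : Set G) (hSW' : S ⊆ W')
    (h1W' : L.one ∈ W') : L.QuotCarrier H W → L.QuotCarrier H' W' := by
  classical exact fun q =>
    if h : ∃ s : W, (s : G) ∈ S ∧ Quot.mk (L.quotRel H W) s = q then
      Quot.mk (L.quotRel H' W') ⟨h.choose, hSW' h.choose_spec.1⟩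
    else Quot.mk (L.quotRel H' W') ⟨L.one, h1W'⟩

section Comparison

variable {H W H' W' U S : Set G} (hS : L.IsComparisonNbhd U W W' S) (h1W' : L.one ∈ W')
  (hE : Equivalence (L.quotRel H W)) (htr : ∀ z ∈ U, z ∈ H → z ∈ H')
  (hstd : L.Std) (hUn : L.IsProdChain Un) (hW : W ⊆ Un 3) (hWsym : L.IsSymmetric W)
  (hWo : IsOpen W) (hW'o : IsOpen W')
  {h1W : L.one ∈ W} {Q : LocalGroup (L.QuotCarrier H W)} {Q' : LocalGroup (L.QuotCarrier H' W')}
  (hQ : L.IsQuotStructure H W h1W Q) (hQ' : L.IsQuotStructure H' W' h1W' Q')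

theorem mk_mem_quotImage {s : W} (hs : (s : G) ∈ S) :
    Quot.mk (L.quotRel H W) s ∈ L.quotImage H W S :=
  ⟨s, hs, rfl⟩

include hE htr in
theorem comparisonMap_mk (hSW' : S ⊆ W') {w : W} (hw' : (w : G) ∈ W')
    (hwU : ∀ s ∈ S, L.mul (L.inv s) w ∈ U) (hw : Quot.mk _ w ∈ L.quotImage H W S) :
    L.comparisonMap H W H' W' S hSW' h1W' (Quot.mk _ w) = Quot.mk _ ⟨w, hw'⟩ := by
  have hex : ∃ s : W, (s : G) ∈ S ∧ Quot.mk (L.quotRel H W) s = Quot.mk _ w := hw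
  rw [comparisonMap, dif_pos hex]
  obtain ⟨hs, hsw⟩ := hex.choose_spec
  exact Quot.sound (htr _ (hwU _ hs) ((quot_mk_eq_iff hE).mp hsw))

include hE htr in
theorem comparisonMap_mk_of_mem {s : W} (hs : (s : G) ∈ S) :
    L.comparisonMap H W H' W' S hS.subset_right h1W' (Quot.mk _ s) =
      Quot.mk _ ⟨s, hS.subset_right hs⟩ :=
  comparisonMap_mk h1W' hE htr _ _ (fun _ ht => hS.mul_mem_U _ (hS.inv_mem _ ht) _ hs)
    (mk_mem_quotImage hs)

include hE htr in
theorem mapsTo_comparisonMap :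
    Set.MapsTo (L.comparisonMap H W H' W' S hS.subset_right h1W') (L.quotImage H W S)
      (L.quotImage H' W' S) := by
  rintro _ ⟨s, hs, rfl⟩
  rw [comparisonMap_mk_of_mem hS h1W' hE htr hs]
  exact mk_mem_quotImage (W := W') hs

include hE htr in
theorem comparisonMap_comparisonMap (hE' : Equivalence (L.quotRel H' W'))
    (htr' : ∀ z ∈ U, z ∈ H' → z ∈ H) {q : L.QuotCarrier H W} (hq : q ∈ L.quotImage H W S) :
    L.comparisonMap H' W' H W S hS.subset_left h1W
      (L.comparisonMap H W H' W' S hS.subset_right h1W' q) = q := by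
  obtain ⟨s, hs, rfl⟩ := hq
  rw [comparisonMap_mk_of_mem hS h1W' hE htr hs,
    comparisonMap_mk_of_mem hS.symm h1W hE' htr' (s := ⟨s, hS.subset_right hs⟩) hs]

include hE htr hstd hUn hW hWsym hWo hW'o in
theorem isOpen_preimage_comparisonMap_inter {O' : Set (L.QuotCarrier H' W')} (hO' : IsOpen O') :
    IsOpen (L.comparisonMap H W H' W' S hS.subset_right h1W' ⁻¹' O' ∩ L.quotImage H W S) := by
  set C : Set G := Subtype.val '' (Quot.mk (L.quotRel H' W') ⁻¹' O')
  have hC : IsOpen C := hW'o.isOpenMap_subtype_val _ (hO'.preimage continuous_quot_mk)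
  rw [← isQuotientMap_quot_mk.isOpen_preimage]
  convert (isOpen_setOf_exists_inv_mul_mem hstd hUn hW hWsym hWo H (hS.isOpen.inter hC)
    (Set.inter_subset_left.trans hS.subset_left)).preimage continuous_subtype_val
  ext w
  simp only [Set.mem_preimage, Set.mem_inter_iff, Set.mem_ofPred_eq]
  constructor
  · rintro ⟨hwO, t, ht, htw⟩
    rw [← htw, comparisonMap_mk_of_mem hS h1W' hE htr ht] at hwO
    exact ⟨w.2, t, ⟨ht, _, hwO, rfl⟩, (quot_mk_eq_iff hE).mp htw⟩
  · rintro ⟨-, s, ⟨hs, t, htO, rfl⟩, hsw⟩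
    have hsw' : Quot.mk (L.quotRel H W) ⟨t, hS.subset_left hs⟩ = Quot.mk _ w := Quot.sound hsw
    refine ⟨?_, hsw' ▸ mk_mem_quotImage hs⟩
    rw [← hsw', comparisonMap_mk_of_mem hS h1W' hE htr hs]
    exact htO

include hS h1W' hE htr hstd hUn hW hWsym hWo hW'o in
theorem isOpen_quotImage : IsOpen (L.quotImage H W S) := by
  simpa only [Set.preimage_univ, Set.univ_inter] using
    isOpen_preimage_comparisonMap_inter hS h1W' hE htr hstd hUn hW hWsym hWo hW'o isOpen_univ

include hE htr hstd hUn hW hWsym hWo hW'o in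
theorem continuousOn_comparisonMap :
    ContinuousOn (L.comparisonMap H W H' W' S hS.subset_right h1W') (L.quotImage H W S) :=
  continuousOn_iff'.mpr fun _ hO' =>
    ⟨_, isOpen_preimage_comparisonMap_inter hS h1W' hE htr hstd hUn hW hWsym hWo hW'o hO',
      by rw [Set.inter_assoc, Set.inter_self]⟩

include hE htr hQ hQ' in
theorem comparisonMap_inv {q : L.QuotCarrier H W} (hq : q ∈ L.quotImage H W S) :
    L.comparisonMap H W H' W' S hS.subset_right h1W' (Q.inv q) =
      Q'.inv (L.comparisonMap H W H' W' S hS.subset_right h1W' q) := by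
  obtain ⟨s, hs, rfl⟩ := hq
  have hs' := hS.inv_mem _ hs
  rw [hQ.2.2.1 s (hS.subset_left hs'), comparisonMap_mk_of_mem hS h1W' hE htr hs,
    hQ'.2.2.1 _ (hS.subset_right hs'),
    comparisonMap_mk_of_mem hS h1W' hE htr (s := ⟨_, hS.subset_left hs'⟩) hs']

include hE htr hUn hW hQ hQ' in
theorem comparisonMap_mul {x y : L.QuotCarrier H W} (hx : x ∈ L.quotImage H W S)
    (hy : y ∈ L.quotImage H W S) (hxy : Q.mul x y ∈ L.quotImage H W S) :
    (L.comparisonMap H W H' W' S hS.subset_right h1W' x,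
        L.comparisonMap H W H' W' S hS.subset_right h1W' y) ∈ Q'.restOmega (L.quotImage H' W' S) ∧
      L.comparisonMap H W H' W' S hS.subset_right h1W' (Q.mul x y) =
        Q'.mul (L.comparisonMap H W H' W' S hS.subset_right h1W' x)
          (L.comparisonMap H W H' W' S hS.subset_right h1W' y) := by
  obtain ⟨s₁, hs₁, rfl⟩ := hx
  obtain ⟨s₂, hs₂, rfl⟩ := hy
  have hΩ : ((s₁ : G), (s₂ : G)) ∈ L.Omega :=
    hUn.mem_Omega (by norm_num) (hW (hS.subset_left hs₁)) (hW (hS.subset_left hs₂))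
  have hmul := hQ.2.2.2.2 s₁ s₂ hΩ (hS.mul_mem_left _ hs₁ _ hs₂)
  have hmul' := hQ'.2.2.2.2 ⟨s₁, hS.subset_right hs₁⟩ ⟨s₂, hS.subset_right hs₂⟩ hΩ
    (hS.mul_mem_right _ hs₁ _ hs₂)
  have hf : L.comparisonMap H W H' W' S hS.subset_right h1W' (Q.mul (Quot.mk _ s₁) (Quot.mk _ s₂))
      = Quot.mk _ ⟨L.mul s₁ s₂, hS.mul_mem_right _ hs₁ _ hs₂⟩ := by
    rw [hmul] at hxy ⊢
    exact comparisonMap_mk h1W' hE htr hS.subset_right _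
      (fun s hs => hS.mul_mul_mem_U _ (hS.inv_mem _ hs) _ hs₁ _ hs₂) hxy
  rw [comparisonMap_mk_of_mem hS h1W' hE htr hs₁, comparisonMap_mk_of_mem hS h1W' hE htr hs₂,
    hmul', hf]
  refine ⟨⟨?_, mk_mem_quotImage hs₁, mk_mem_quotImage hs₂, ?_⟩, rfl⟩
  · rw [hQ'.2.2.2.1]
    exact ⟨_, _, hΩ, hS.mul_mem_right _ hs₁ _ hs₂, rfl⟩
  · rw [hmul', ← hf]
    exact mapsTo_comparisonMap hS h1W' hE htr hxy

include hE htr hstd hUn hW hWsym hWo hW'o hQ hQ' in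
theorem isRestMorphism_comparisonMap :
    Q.IsRestMorphism Q' (L.quotImage H W S) (L.quotImage H' W' S)
      (L.comparisonMap H W H' W' S hS.subset_right h1W') := by
  have hmaps := mapsTo_comparisonMap hS h1W' hE htr
  refine ⟨continuousOn_comparisonMap hS h1W' hE htr hstd hUn hW hWsym hWo hW'o, hmaps, ?_,
    fun x hx => ?_, fun x y hxy => comparisonMap_mul hS h1W' hE htr hUn hW hQ hQ' hxy.2.1
      hxy.2.2.1 hxy.2.2.2⟩
  · rw [hQ.1, comparisonMap_mk_of_mem hS h1W' hE htr (s := ⟨_, h1W⟩) hS.one_mem, hQ'.1]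
  · have hinv := comparisonMap_inv hS h1W' hE htr hQ hQ' hx.1.2
    refine ⟨⟨⟨hQ'.2.1 ▸ Set.mem_univ _, hmaps hx.1.2⟩, ?_⟩, hinv⟩
    rw [Set.mem_preimage, ← hinv]
    exact hmaps hx.2

end Comparison

theorem locallyIsomorphic_of_isComparisonNbhd (hstd : L.Std) (hUn : L.IsProdChain Un)
    {H W H' W' U S : Set G} (hW : W ⊆ Un 3) (hW' : W' ⊆ Un 3) (hWsym : L.IsSymmetric W)
    (hW'sym : L.IsSymmetric W') (hWo : IsOpen W) (hW'o : IsOpen W')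
    (hE : Equivalence (L.quotRel H W)) (hE' : Equivalence (L.quotRel H' W'))
    (htr : ∀ z ∈ U, z ∈ H → z ∈ H') (htr' : ∀ z ∈ U, z ∈ H' → z ∈ H)
    (hS : L.IsComparisonNbhd U W W' S) {h1W : L.one ∈ W} {h1W' : L.one ∈ W'}
    {Q : LocalGroup (L.QuotCarrier H W)} {Q' : LocalGroup (L.QuotCarrier H' W')}
    (hQ : L.IsQuotStructure H W h1W Q) (hQ' : L.IsQuotStructure H' W' h1W' Q') :
    Q.LocallyIsomorphic Q' := by
  have hmaps := mapsTo_comparisonMap hS h1W' hE htr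
  have hmaps' := mapsTo_comparisonMap hS.symm h1W hE' htr'
  have hinv : Set.InvOn (L.comparisonMap H' W' H W S hS.subset_left h1W)
      (L.comparisonMap H W H' W' S hS.subset_right h1W') (L.quotImage H W S)
      (L.quotImage H' W' S) :=
    ⟨fun _ hq => comparisonMap_comparisonMap hS h1W' hE htr hE' htr' hq,
      fun _ hq => comparisonMap_comparisonMap hS.symm h1W hE' htr' hE htr hq⟩
  exact ⟨_, _, _, _, isOpen_quotImage hS h1W' hE htr hstd hUn hW hWsym hWo hW'o,
    hQ.1 ▸ mk_mem_quotImage hS.one_mem,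
    isOpen_quotImage hS.symm h1W hE' htr' hstd hUn hW' hW'sym hW'o hWo,
    hQ'.1 ▸ mk_mem_quotImage hS.one_mem, hinv.bijOn hmaps hmaps', hinv.1, hinv.2,
    isRestMorphism_comparisonMap hS h1W' hE htr hstd hUn hW hWsym hWo hW'o hQ hQ',
    isRestMorphism_comparisonMap hS.symm h1W hE' htr' hstd hUn hW' hW'sym hW'o hWo hQ' hQ⟩

end LocalGroup

open LocalGroup

theorem statement_15_general {G : Type*} [TopologicalSpace G]
    (L : LocalGroup G) (hstd : L.Std) (Un : ℕ → Set G) (hUn : L.IsProdChain Un)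
    (H V H' V' : Set G) (hHV : L.IsNormalSublocalGroup H V)
    (hH'V' : L.IsNormalSublocalGroup H' V')
    (U : Set G) (hUo : IsOpen U) (h1U : L.one ∈ U) (hequiv : H ∩ U = H' ∩ U)
    (W W' : Set G) (hWo : IsOpen W) (h1W : L.one ∈ W) (hWsym : L.IsSymmetric W)
    (hW6 : W ⊆ Un 6) (hWpow : L.setPow W 6 ⊆ V)
    (hW'o : IsOpen W') (h1W' : L.one ∈ W') (hW'sym : L.IsSymmetric W')
    (hW'6 : W' ⊆ Un 6) (hW'pow : L.setPow W' 6 ⊆ V')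
    (Q : LocalGroup (L.QuotCarrier H W)) (hQ : L.IsQuotStructure H W h1W Q)
    (Q' : LocalGroup (L.QuotCarrier H' W')) (hQ' : L.IsQuotStructure H' W' h1W' Q') :
    Q.LocallyIsomorphic Q' := by
  have h64 : Un 6 ⊆ Un 4 := hUn.antitone (by norm_num) (by norm_num)
  have h43 : Un 4 ⊆ Un 3 := hUn.antitone (by norm_num) (by norm_num)
  have hE : Equivalence (L.quotRel H W) :=
    quotRel_equivalence hstd hUn hHV.1 (hW6.trans h64) hWsym
      fun x hx y hy => hWpow (hUn.mul_mem_setPow (by norm_num) hW6 h1W hx hy)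
  have hE' : Equivalence (L.quotRel H' W') :=
    quotRel_equivalence hstd hUn hH'V'.1 (hW'6.trans h64) hW'sym
      fun x hx y hy => hW'pow (hUn.mul_mem_setPow (by norm_num) hW'6 h1W' hx hy)
  obtain ⟨S, hS⟩ := hstd.exists_isComparisonNbhd hUo h1U hWo h1W hW'o h1W'
  exact locallyIsomorphic_of_isComparisonNbhd hstd hUn (hW6.trans (h64.trans h43))
    (hW'6.trans (h64.trans h43)) hWsym hW'sym hWo hW'o hE hE'
    (fun z hz hzH => (hequiv ▸ ⟨hzH, hz⟩ : z ∈ H' ∩ U).1)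
    (fun z hz hzH => (hequiv.symm ▸ ⟨hzH, hz⟩ : z ∈ H ∩ U).1) hS hQ hQ'

/-- local quotients by equivalent normal sublocal groups are locally
isomorphic. -/
theorem statement_15 {G : Type*} [TopologicalSpace G] [T2Space G]
    (L : LocalGroup G) (hstd : L.Std) (Un : ℕ → Set G) (hUn : L.IsProdChain Un)
    (H V H' V' : Set G) (hHV : L.IsNormalSublocalGroup H V)
    (hH'V' : L.IsNormalSublocalGroup H' V')
    (U : Set G) (hUo : IsOpen U) (h1U : L.one ∈ U) (hequiv : H ∩ U = H' ∩ U)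
    (W W' : Set G) (hWo : IsOpen W) (h1W : L.one ∈ W) (hWsym : L.IsSymmetric W)
    (hW6 : W ⊆ Un 6) (hWpow : L.setPow W 6 ⊆ V)
    (hW'o : IsOpen W') (h1W' : L.one ∈ W') (hW'sym : L.IsSymmetric W')
    (hW'6 : W' ⊆ Un 6) (hW'pow : L.setPow W' 6 ⊆ V')
    (Q : LocalGroup (L.QuotCarrier H W)) (hQ : L.IsQuotStructure H W h1W Q)
    (Q' : LocalGroup (L.QuotCarrier H' W')) (hQ' : L.IsQuotStructure H' W' h1W' Q') :
    Q.LocallyIsomorphic Q' :=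
  statement_15_general L hstd Un hUn H V H' V' hHV hH'V' U hUo h1U hequiv W W' hWo h1W hWsym hW6
    hWpow hW'o h1W' hW'sym hW'6 hW'pow Q hQ Q' hQ'
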